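/- Suppose the C-matrix C_t is column sign-coherent, and let t' be t with index k appended. Then the C- and G-matrix mutations take the tropical-sign form C_{t'} = C_t (J_k + [ε_{k;t} B_t]₊^{k•}) and G_{t'} = G_t (J_k + [−ε_{k;t} B_t]₊^{•k}), where ε_{k;t} is the tropical sign of the c-vector c_{k;t}. -/
import Mathlib


open Matrix

namespace ClusterPattern

variable {ι : Type*} [Fintype ι] [DecidableEq ι]

/-- Entrywise positive part `[A]₊`. -/
def posPart (A : Matrix ι ι ℤ) : Matrix ι ι ℤ := Matrix.of fun i j => max (A i j) 0

/-- `A^{•k}`: all columns other than the `k`-th set to `0`. -/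
def colSel (k : ι) (A : Matrix ι ι ℤ) : Matrix ι ι ℤ :=
  Matrix.of fun i j => if j = k then A i j else 0

/-- `A^{k•}`: all rows other than the `k`-th set to `0`. -/
def rowSel (k : ι) (A : Matrix ι ι ℤ) : Matrix ι ι ℤ :=
  Matrix.of fun i j => if i = k then A i j else 0

/-- `J_k`: identity with `k`-th diagonal entry replaced by `-1`. -/
def Jmat (k : ι) : Matrix ι ι ℤ := Matrix.diagonal fun i => if i = k then -1 else 1

/-- A skew-symmetrizable integer matrix. -/
def IsSkewSymmetrizable (B : Matrix ι ι ℤ) : Prop :=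
  ∃ D : ι → ℚ, (∀ i, 0 < D i) ∧ ∀ i j, D i * (B i j : ℚ) = -(D j * (B j i : ℚ))

/-- Matrix mutation `μ_k`. -/
def mutate (k : ι) (B : Matrix ι ι ℤ) : Matrix ι ι ℤ :=
  Matrix.of fun i j => if i = k ∨ j = k then -B i j
    else B i j + B i k * max (B k j) 0 + max (-B i k) 0 * B k j

/-- The exchange matrix `B_t` at the vertex reached from `B0` along the path `w`. -/
def Bmat (B0 : Matrix ι ι ℤ) (w : List ι) : Matrix ι ι ℤ :=
  w.foldl (fun B k => mutate k B) B0

/-- One mutation step of a `C`-matrix. -/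
def Cstep (B C : Matrix ι ι ℤ) (k : ι) : Matrix ι ι ℤ :=
  C * Jmat k + C * rowSel k (posPart B) + colSel k (posPart (-C)) * B

/-- One mutation step of a `G`-matrix. -/
def Gstep (B0 B C G : Matrix ι ι ℤ) (k : ι) : Matrix ι ι ℤ :=
  G * Jmat k + G * colSel k (posPart (-B)) - B0 * colSel k (posPart (-C))

/-- The `C`-matrix `C_t` at the vertex reached from the initial matrix `B0` along `w`. -/
def Cmat (B0 : Matrix ι ι ℤ) (w : List ι) : Matrix ι ι ℤ :=
  (w.foldl (fun p k => (mutate k p.1, Cstep p.1 p.2 k))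
    ((B0, 1) : Matrix ι ι ℤ × Matrix ι ι ℤ)).2

/-- The `G`-matrix `G_t` at the vertex reached from the initial matrix `B0` along `w`. -/
def Gmat (B0 : Matrix ι ι ℤ) (w : List ι) : Matrix ι ι ℤ :=
  (w.foldl (fun p k => (mutate k p.1, Cstep p.1 p.2.1 k, Gstep B0 p.1 p.2.1 p.2.2 k))
    ((B0, 1, 1) : Matrix ι ι ℤ × Matrix ι ι ℤ × Matrix ι ι ℤ)).2.2

/-- A nonzero integer vector with all entries nonnegative. -/
def IsPositiveVec (v : ι → ℤ) : Prop := v ≠ 0 ∧ ∀ i, 0 ≤ v i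

/-- A nonzero integer vector with all entries nonpositive. -/
def IsNegativeVec (v : ι → ℤ) : Prop := v ≠ 0 ∧ ∀ i, v i ≤ 0

/-- Every column is a positive or a negative vector. -/
def ColSignCoherent (M : Matrix ι ι ℤ) : Prop :=
  ∀ j, IsPositiveVec (fun i => M i j) ∨ IsNegativeVec (fun i => M i j)

/-- Every row is a positive or a negative vector. -/
def RowSignCoherent (M : Matrix ι ι ℤ) : Prop :=
  ∀ i, IsPositiveVec (fun j => M i j) ∨ IsNegativeVec (fun j => M i j)


section Aux

variable {ι : Type*} [Fintype ι] [DecidableEq ι]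

lemma colSel_mul_apply (k : ι) (M N : Matrix ι ι ℤ) (i j : ι) :
    (colSel k M * N) i j = M i k * N k j := by
  rw [Matrix.mul_apply, Finset.sum_eq_single k]
  · simp [colSel]
  · intro l _ hl; simp [colSel, hl]
  · simp

lemma mul_rowSel_apply (k : ι) (M N : Matrix ι ι ℤ) (i j : ι) :
    (M * rowSel k N) i j = M i k * N k j := by
  rw [Matrix.mul_apply, Finset.sum_eq_single k]
  · simp [rowSel]
  · intro l _ hl; simp [rowSel, hl]
  · simp

lemma mul_colSel_apply (k : ι) (M N : Matrix ι ι ℤ) (i j : ι) :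
    (M * colSel k N) i j = if j = k then (M * N) i k else 0 := by
  by_cases h : j = k
  · subst h
    rw [Matrix.mul_apply, Matrix.mul_apply, if_pos rfl]
    exact Finset.sum_congr rfl fun l _ => by simp [colSel]
  · rw [Matrix.mul_apply, if_neg h]
    exact Finset.sum_eq_zero fun l _ => by simp [colSel, h]

lemma mul_J_apply (k : ι) (M : Matrix ι ι ℤ) (i j : ι) :
    (M * Jmat k) i j = if j = k then -(M i j) else M i j := by
  rw [Jmat, Matrix.mul_diagonal]
  split_ifs <;> ring

lemma J_mul_apply (k : ι) (M : Matrix ι ι ℤ) (i j : ι) :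
    (Jmat k * M) i j = if i = k then -(M i j) else M i j := by
  rw [Jmat, Matrix.diagonal_mul]
  split_ifs <;> ring

lemma mutate_factor (k : ι) (B : Matrix ι ι ℤ) (hB : B k k = 0) :
    mutate k B = (Jmat k + colSel k (posPart (-B))) * B * (Jmat k + rowSel k (posPart B)) := by
  ext i j
  rw [Matrix.add_mul, Matrix.add_mul, Matrix.mul_add, Matrix.mul_add]
  simp only [Matrix.add_apply, mul_J_apply, J_mul_apply, mul_rowSel_apply, colSel_mul_apply,
    posPart, Matrix.neg_apply, Matrix.of_apply, mutate]
  by_cases hi : i = k <;> by_cases hj : j = k <;>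
    simp [hi, hj, hB] <;> ring

lemma E_sq (k : ι) (B : Matrix ι ι ℤ) (hB : B k k = 0) :
    (Jmat k + colSel k (posPart (-B))) * (Jmat k + colSel k (posPart (-B))) = 1 := by
  ext i j
  rw [Matrix.add_mul, Matrix.mul_add, Matrix.mul_add]
  simp only [Matrix.add_apply, colSel_mul_apply, J_mul_apply, mul_J_apply]
  by_cases hi : i = k <;> by_cases hj : j = k <;>
    simp [colSel, posPart, Jmat, Matrix.diagonal_apply, Matrix.one_apply, hi, hj, hB] <;>
    split_ifs <;> simp_all

lemma colSel_mul_E (k : ι) (M N : Matrix ι ι ℤ) (hN : N k k = 0) :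
    colSel k M * (Jmat k + colSel k N) = -(colSel k M) := by
  ext i j
  rw [Matrix.mul_add, Matrix.add_apply, mul_J_apply, colSel_mul_apply, Matrix.neg_apply]
  by_cases hj : j = k <;> simp [colSel, hj, hN]

lemma RB_F (k : ι) (M B : Matrix ι ι ℤ) (hB : B k k = 0) :
    (colSel k M * B) * (Jmat k + rowSel k (posPart B)) = colSel k M * B := by
  ext i j
  rw [Matrix.mul_add, Matrix.add_apply, mul_J_apply, mul_rowSel_apply]
  by_cases hj : j = k <;> simp [colSel_mul_apply, posPart, hj, hB]

lemma step_identity (k : ι) (B0 B C G : Matrix ι ι ℤ) (hB : B k k = 0)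
    (hGB : G * B = B0 * C) :
    Gstep B0 B C G k * mutate k B = B0 * Cstep B C k := by
  have hN : posPart (-B) k k = 0 := by simp [posPart, hB]
  have hE := E_sq k B hB
  have hRE := colSel_mul_E k (posPart (-C)) (posPart (-B)) hN
  have hRBF := RB_F k (posPart (-C)) B hB
  have e1 : Gstep B0 B C G k =
      G * (Jmat k + colSel k (posPart (-B))) - B0 * colSel k (posPart (-C)) := by
    rw [Gstep, Matrix.mul_add]
  rw [e1, mutate_factor k B hB, Matrix.sub_mul]
  rw [mul_assoc (Jmat k + colSel k (posPart (-B))) B (Jmat k + rowSel k (posPart B))]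
  have e2 : G * (Jmat k + colSel k (posPart (-B))) *
      ((Jmat k + colSel k (posPart (-B))) * (B * (Jmat k + rowSel k (posPart B)))) =
      B0 * (C * (Jmat k + rowSel k (posPart B))) := by
    rw [mul_assoc G, ← mul_assoc (Jmat k + colSel k (posPart (-B))), hE, one_mul,
      ← mul_assoc G B, hGB, mul_assoc]
  have h4 : colSel k (posPart (-C)) *
      ((Jmat k + colSel k (posPart (-B))) * (B * (Jmat k + rowSel k (posPart B)))) =
      -(colSel k (posPart (-C)) * B) := by
    rw [← mul_assoc, hRE, Matrix.neg_mul, ← mul_assoc, hRBF]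
  have e3 : B0 * colSel k (posPart (-C)) *
      ((Jmat k + colSel k (posPart (-B))) * (B * (Jmat k + rowSel k (posPart B)))) =
      -(B0 * (colSel k (posPart (-C)) * B)) := by
    rw [mul_assoc B0, h4, Matrix.mul_neg]
  rw [e2, e3, sub_neg_eq_add, ← Matrix.mul_add]
  congr 1
  rw [Cstep, Matrix.mul_add]

lemma mutate_skew (k : ι) {B : Matrix ι ι ℤ} (h : IsSkewSymmetrizable B) :
    IsSkewSymmetrizable (mutate k B) := by
  obtain ⟨D, hD, hs⟩ := h
  refine ⟨D, hD, fun i j => ?_⟩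
  by_cases hik : i = k ∨ j = k
  · have hik' : j = k ∨ i = k := hik.symm
    simp only [mutate, Matrix.of_apply, if_pos hik, if_pos hik']
    push_cast
    linarith [hs i j]
  · have hik2 : ¬(j = k ∨ i = k) := fun h' => hik h'.symm
    simp only [mutate, Matrix.of_apply, if_neg hik, if_neg hik2]
    push_cast [Int.cast_max]
    have hm1 : (D i) * max (-(B i k : ℚ)) 0 = D k * max (B k i : ℚ) 0 := by
      rw [mul_max_of_nonneg _ _ (hD i).le, mul_max_of_nonneg _ _ (hD k).le,
        mul_zero, mul_zero]
      congr 1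
      linarith [hs i k]
    have hm2 : (D j) * max (-(B j k : ℚ)) 0 = D k * max (B k j : ℚ) 0 := by
      rw [mul_max_of_nonneg _ _ (hD j).le, mul_max_of_nonneg _ _ (hD k).le,
        mul_zero, mul_zero]
      congr 1
      linarith [hs k j]
    linear_combination hs i j + max ((B k j : ℚ)) 0 * hs i k + (B k j : ℚ) * hm1 +
      max ((B k i : ℚ)) 0 * hs k j + (B k i : ℚ) * hm2

lemma skew_diag {B : Matrix ι ι ℤ} (h : IsSkewSymmetrizable B) (k : ι) : B k k = 0 := by
  obtain ⟨D, hD, hs⟩ := h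
  have h2 : D k * (B k k : ℚ) = 0 := by linarith [hs k k]
  have h3 : (B k k : ℚ) = 0 := (mul_eq_zero.mp h2).resolve_left (hD k).ne'
  exact_mod_cast h3

lemma fold_inv (B0 : Matrix ι ι ℤ) (w : List ι) :
    ∀ (B C G : Matrix ι ι ℤ), IsSkewSymmetrizable B → G * B = B0 * C →
      IsSkewSymmetrizable
        (w.foldl (fun p k => (mutate k p.1, Cstep p.1 p.2.1 k, Gstep B0 p.1 p.2.1 p.2.2 k))
          (B, C, G)).1 ∧
      (w.foldl (fun p k => (mutate k p.1, Cstep p.1 p.2.1 k, Gstep B0 p.1 p.2.1 p.2.2 k))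
          (B, C, G)).2.2 *
        (w.foldl (fun p k => (mutate k p.1, Cstep p.1 p.2.1 k, Gstep B0 p.1 p.2.1 p.2.2 k))
          (B, C, G)).1 =
      B0 * (w.foldl (fun p k => (mutate k p.1, Cstep p.1 p.2.1 k, Gstep B0 p.1 p.2.1 p.2.2 k))
          (B, C, G)).2.1 := by
  induction w with
  | nil => intro B C G h1 h2; exact ⟨h1, h2⟩
  | cons a t ih =>
    intro B C G h1 h2
    simp only [List.foldl_cons]
    exact ih _ _ _ (mutate_skew a h1) (step_identity a B0 B C G (skew_diag h1 a) h2)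

lemma tripleFold_fst (B0 : Matrix ι ι ℤ) (w : List ι) :
    ∀ (B C G : Matrix ι ι ℤ),
      (w.foldl (fun p k => (mutate k p.1, Cstep p.1 p.2.1 k, Gstep B0 p.1 p.2.1 p.2.2 k))
        (B, C, G)).1 = w.foldl (fun B k => mutate k B) B := by
  induction w with
  | nil => intro B C G; rfl
  | cons a t ih => intro B C G; simp only [List.foldl_cons]; exact ih _ _ _

lemma pairFold_fst (w : List ι) :
    ∀ (B C : Matrix ι ι ℤ),
      (w.foldl (fun p k => (mutate k p.1, Cstep p.1 p.2 k)) (B, C)).1 =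
        w.foldl (fun B k => mutate k B) B := by
  induction w with
  | nil => intro B C; rfl
  | cons a t ih => intro B C; simp only [List.foldl_cons]; exact ih _ _

lemma tripleFold_snd_fst (B0 : Matrix ι ι ℤ) (w : List ι) :
    ∀ (B C G : Matrix ι ι ℤ),
      (w.foldl (fun p k => (mutate k p.1, Cstep p.1 p.2.1 k, Gstep B0 p.1 p.2.1 p.2.2 k))
        (B, C, G)).2.1 =
      (w.foldl (fun p k => (mutate k p.1, Cstep p.1 p.2 k)) (B, C)).2 := by
  induction w with
  | nil => intro B C G; rfl
  | cons a t ih => intro B C G; simp only [List.foldl_cons]; exact ih _ _ _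

lemma Cmat_snoc (B0 : Matrix ι ι ℤ) (w : List ι) (k : ι) :
    Cmat B0 (w ++ [k]) = Cstep (Bmat B0 w) (Cmat B0 w) k := by
  unfold Cmat
  rw [List.foldl_append, List.foldl_cons, List.foldl_nil]
  rw [show Bmat B0 w = (w.foldl (fun p k => (mutate k p.1, Cstep p.1 p.2 k))
    ((B0, 1) : Matrix ι ι ℤ × Matrix ι ι ℤ)).1 from (pairFold_fst w B0 1).symm]

lemma Gmat_snoc (B0 : Matrix ι ι ℤ) (w : List ι) (k : ι) :
    Gmat B0 (w ++ [k]) = Gstep B0 (Bmat B0 w) (Cmat B0 w) (Gmat B0 w) k := by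
  unfold Gmat
  rw [List.foldl_append, List.foldl_cons, List.foldl_nil]
  rw [show Bmat B0 w = (w.foldl
      (fun p k => (mutate k p.1, Cstep p.1 p.2.1 k, Gstep B0 p.1 p.2.1 p.2.2 k))
      ((B0, 1, 1) : Matrix ι ι ℤ × Matrix ι ι ℤ × Matrix ι ι ℤ)).1 from
    ((tripleFold_fst B0 w B0 1 1).symm)]
  rw [show Cmat B0 w = (w.foldl
      (fun p k => (mutate k p.1, Cstep p.1 p.2.1 k, Gstep B0 p.1 p.2.1 p.2.2 k))
      ((B0, 1, 1) : Matrix ι ι ℤ × Matrix ι ι ℤ × Matrix ι ι ℤ)).2.1 from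
    ((tripleFold_snd_fst B0 w B0 1 1).trans rfl).symm]

lemma GB_eq (B0 : Matrix ι ι ℤ) (hB0 : IsSkewSymmetrizable B0) (w : List ι) :
    Gmat B0 w * Bmat B0 w = B0 * Cmat B0 w := by
  have h := (fold_inv B0 w B0 1 1 hB0 (by rw [one_mul, mul_one])).2
  rw [tripleFold_fst B0 w B0 1 1, tripleFold_snd_fst B0 w B0 1 1] at h
  exact h

lemma key1 (c b e : ℤ) (h : (e = 1 ∧ 0 ≤ c) ∨ (e = -1 ∧ c ≤ 0)) :
    c * max b 0 + max (-c) 0 * b = c * max (e * b) 0 := by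
  rcases h with ⟨rfl, hc⟩ | ⟨rfl, hc⟩
  · rw [max_eq_right (neg_nonpos.mpr hc), zero_mul, add_zero, one_mul]
  · rw [max_eq_left (neg_nonneg.mpr hc)]
    rcases le_total b 0 with hb | hb
    · rw [max_eq_right hb, max_eq_left (by linarith : (0:ℤ) ≤ -1 * b)]
      ring
    · rw [max_eq_left hb, max_eq_right (by linarith : (-1:ℤ) * b ≤ 0)]
      ring

lemma max_neg_add (b : ℤ) : max (-b) 0 + b = max b 0 := by
  rcases le_total b 0 with h | h
  · rw [max_eq_left (neg_nonneg.mpr h), max_eq_right h]; ring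
  · rw [max_eq_right (neg_nonpos.mpr h), max_eq_left h]; ring

lemma Cstep_tropical (k : ι) (B C : Matrix ι ι ℤ) (e : ℤ)
    (he : (e = 1 ∧ ∀ i, 0 ≤ C i k) ∨ (e = -1 ∧ ∀ i, C i k ≤ 0)) :
    Cstep B C k = C * (Jmat k + rowSel k (posPart (e • B))) := by
  ext i j
  rw [Cstep, Matrix.mul_add, Matrix.add_apply, Matrix.add_apply, Matrix.add_apply,
    mul_rowSel_apply, mul_rowSel_apply, colSel_mul_apply]
  have : posPart (e • B) k j = max (e * B k j) 0 := by
    simp [posPart, Matrix.smul_apply, smul_eq_mul]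
  rw [this, add_assoc]
  congr 1
  have hB : posPart B k j = max (B k j) 0 := rfl
  have hC : posPart (-C) i k = max (-(C i k)) 0 := by simp [posPart]
  rw [hB, hC]
  apply key1
  rcases he with ⟨h1, h2⟩ | ⟨h1, h2⟩
  · exact Or.inl ⟨h1, h2 i⟩
  · exact Or.inr ⟨h1, h2 i⟩

lemma Gstep_tropical (k : ι) (B0 B C G : Matrix ι ι ℤ) (e : ℤ)
    (hGB : G * B = B0 * C)
    (he : (e = 1 ∧ ∀ i, 0 ≤ C i k) ∨ (e = -1 ∧ ∀ i, C i k ≤ 0)) :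
    Gstep B0 B C G k = G * (Jmat k + colSel k (posPart ((-e) • B))) := by
  ext i j
  rw [Gstep, Matrix.mul_add, Matrix.add_apply, Matrix.sub_apply, Matrix.add_apply,
    mul_colSel_apply, mul_colSel_apply, mul_colSel_apply]
  by_cases hj : j = k
  · rw [if_pos hj, if_pos hj, if_pos hj]
    have hmain : (G * posPart (-B)) i k - (B0 * posPart (-C)) i k =
        (G * posPart ((-e) • B)) i k := by
      rcases he with ⟨rfl, hc⟩ | ⟨rfl, hc⟩
      · have hY : (B0 * posPart (-C)) i k = 0 := by
          rw [Matrix.mul_apply]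
          refine Finset.sum_eq_zero fun l _ => ?_
          have : posPart (-C) l k = 0 := by
            simp only [posPart, Matrix.neg_apply, Matrix.of_apply]
            exact max_eq_right (neg_nonpos.mpr (hc l))
          rw [this, mul_zero]
        have hZ : ((-(1:ℤ)) • B) = -B := by rw [neg_smul, one_smul]
        rw [hY, hZ, sub_zero]
      · have hY : (B0 * posPart (-C)) i k = -((G * B) i k) := by
          rw [Matrix.mul_apply]
          have : ∀ l, B0 i l * posPart (-C) l k = -(B0 i l * C l k) := by
            intro l
            have : posPart (-C) l k = -(C l k) := by
              simp only [posPart, Matrix.neg_apply, Matrix.of_apply]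
              exact max_eq_left (neg_nonneg.mpr (hc l))
            rw [this, mul_neg]
          rw [Finset.sum_congr rfl fun l _ => this l, Finset.sum_neg_distrib,
            ← Matrix.mul_apply, hGB]
        have hZ : ((-(-1:ℤ)) • B) = B := by rw [neg_neg, one_smul]
        rw [hY, hZ, sub_neg_eq_add, Matrix.mul_apply, Matrix.mul_apply, Matrix.mul_apply,
          ← Finset.sum_add_distrib]
        refine Finset.sum_congr rfl fun l _ => ?_
        have h1 : posPart (-B) l k = max (-(B l k)) 0 := by simp [posPart]
        have h2 : posPart B l k = max (B l k) 0 := rfl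
        rw [h1, h2, ← mul_add, max_neg_add]
    linarith [hmain]
  · rw [if_neg hj, if_neg hj, if_neg hj, sub_zero]
  
end Aux

/-- Mutations of `C`- and `G`-matrices in tropical-sign form. -/
theorem mutation_tropical_sign_form (n : ℕ) (hn : 1 ≤ n)
    (B0 : Matrix (Fin n) (Fin n) ℤ) (hB0 : IsSkewSymmetrizable B0)
    (w : List (Fin n)) (k : Fin n)
    (hsc : ColSignCoherent (Cmat B0 w)) (ε : ℤ)
    (hε : (ε = 1 ∧ ∀ i, 0 ≤ Cmat B0 w i k) ∨ (ε = -1 ∧ ∀ i, Cmat B0 w i k ≤ 0)) :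
    Cmat B0 (w ++ [k]) = Cmat B0 w * (Jmat k + rowSel k (posPart (ε • Bmat B0 w))) ∧
    Gmat B0 (w ++ [k]) = Gmat B0 w * (Jmat k + colSel k (posPart ((-ε) • Bmat B0 w))) := by
  constructor
  · rw [Cmat_snoc]
    exact Cstep_tropical k (Bmat B0 w) (Cmat B0 w) ε hε
  · rw [Gmat_snoc]
    exact Gstep_tropical k B0 (Bmat B0 w) (Cmat B0 w) (Gmat B0 w) ε (GB_eq B0 hB0 w) hε

end ClusterPattern
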